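/- arXiv:2003.00306 — 5 statements merged into one kernel-verified Lean document; each statement's English description precedes it below -/
import Mathlib

section
/- Let λ > 0 and let L : H → ℝ be Fréchet differentiable with M-Lipschitz gradient, i.e. ‖∇L(x) − ∇L(y)‖ ≤ M‖x − y‖ for all x, y ∈ H, and suppose there is x* ∈ H with ∇L(x*) = 0. Assume the strict dissipativity condition λ > M μ₀. Then there exist constants m > 0 and c > 0 such that for every x ∈ H with Σ_k ⟨x, f_k⟩²/μ_k² < ∞, writing A x = −λ Σ_k (⟨x, f_k⟩/μ_k) f_k, one has ⟨A x − ∇L(x), x⟩ ≤ −m‖x‖² + c. -/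
open scoped RealInnerProductSpace

/-- **Dissipativity under strict dissipativity.** -/
theorem stmt0 {H : Type*} [NormedAddCommGroup H] [InnerProductSpace ℝ H] [CompleteSpace H]
    (f : HilbertBasis ℕ ℝ H) (μ : ℕ → ℝ) (hμpos : ∀ k, 0 < μ k) (hμ0 : ∀ k, μ k ≤ μ 0)
    (lam M : ℝ) (hlam : 0 < lam)
    (L : H → ℝ) (hdiff : Differentiable ℝ L)
    (hlip : ∀ x y : H, ‖gradient L x - gradient L y‖ ≤ M * ‖x - y‖)
    (xstar : H) (hcrit : gradient L xstar = 0)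
    (hdiss : M * μ 0 < lam) :
    ∃ m c : ℝ, 0 < m ∧ 0 < c ∧
      ∀ x : H, Summable (fun k => ⟪x, f k⟫ ^ 2 / μ k ^ 2) →
        ⟪(-lam) • ∑' k, (⟪x, f k⟫ / μ k) • f k - gradient L x, x⟫
          ≤ -m * ‖x‖ ^ 2 + c := by
  set M' := max M 0 with hM'
  have hM'0 : 0 ≤ M' := le_max_right _ _
  have hμ00 : 0 < μ 0 := hμpos 0
  have hdiss' : M' * μ 0 < lam := by
    rcases max_cases M 0 with ⟨h1, _⟩ | ⟨h1, _⟩ <;> rw [hM', h1]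
    · exact hdiss
    · simpa using hlam
  set ε := lam / μ 0 - M' with hε
  have hεpos : 0 < ε := by
    rw [hε]
    have : M' < lam / μ 0 := (lt_div_iff₀ hμ00).mpr hdiss'
    linarith
  clear_value M' ε
  refine ⟨ε / 2, (M' * ‖xstar‖) ^ 2 / (2 * ε) + 1, half_pos hεpos, by positivity, ?_⟩
  intro x hsx
  set a : ℕ → ℝ := fun k => ⟪x, f k⟫ with ha
  -- gradient bound
  have hgrad : ‖gradient L x‖ ≤ M' * (‖x‖ + ‖xstar‖) := by
    have h1 : ‖gradient L x‖ ≤ M * ‖x - xstar‖ := by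
      have := hlip x xstar
      rwa [hcrit, sub_zero] at this
    have h2 : M * ‖x - xstar‖ ≤ M' * ‖x - xstar‖ :=
      mul_le_mul_of_nonneg_right (hM' ▸ le_max_left M 0) (norm_nonneg _)
    have h3 : M' * ‖x - xstar‖ ≤ M' * (‖x‖ + ‖xstar‖) :=
      mul_le_mul_of_nonneg_left (norm_sub_le _ _) hM'0
    linarith
  -- summability of the vector series
  have hs2 : Summable (fun k => ‖a k / μ k‖ ^ 2) := by
    refine hsx.congr fun k => ?_
    rw [Real.norm_eq_abs, sq_abs, div_pow]
  have hvec : Summable (fun k => (a k / μ k) • f k) := by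
    have := (f.orthonormal.orthogonalFamily.summable_iff_norm_sq_summable
      (fun k => a k / μ k)).mpr hs2
    refine this.congr fun k => ?_
    rw [LinearIsometry.toSpanSingleton_apply]
  set S : H := ∑' k, (a k / μ k) • f k with hS
  -- inner product with the series
  have hkey : HasSum (fun k => a k ^ 2 / μ k) ⟪x, S⟫ := by
    have h1 := hvec.hasSum.mapL (innerSL ℝ x)
    refine h1.congr_fun fun k => ?_
    simp only [innerSL_apply_apply, inner_smul_right]
    show a k ^ 2 / μ k = a k / μ k * a k
    rw [sq]; ring
  -- Parseval
  have hpar : HasSum (fun k => a k ^ 2) (‖x‖ ^ 2) := by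
    have h1 := f.hasSum_inner_mul_inner x x
    rw [real_inner_self_eq_norm_sq] at h1
    refine h1.congr_fun fun k => ?_
    have hc : ⟪(f k : H), x⟫ = a k := real_inner_comm _ _
    rw [hc]
    show a k ^ 2 = a k * a k
    rw [sq]
  -- summability of a k ^ 2 / μ k
  have hTs : Summable (fun k => a k ^ 2 / μ k) := hkey.summable
  have hT : ‖x‖ ^ 2 / μ 0 ≤ ⟪x, S⟫ := by
    have h1 : HasSum (fun k => a k ^ 2 / μ 0) (‖x‖ ^ 2 / μ 0) := hpar.div_const _
    refine hasSum_le (fun k => ?_) h1 hkey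
    exact div_le_div_of_nonneg_left (sq_nonneg _) (hμpos k) (hμ0 k)
  -- inner product bound for gradient
  have hg : -⟪gradient L x, x⟫ ≤ M' * (‖x‖ + ‖xstar‖) * ‖x‖ := by
    have h1 : -⟪gradient L x, x⟫ ≤ ‖gradient L x‖ * ‖x‖ := by
      have := real_inner_le_norm (-(gradient L x)) x
      rwa [inner_neg_left, norm_neg] at this
    exact h1.trans (mul_le_mul_of_nonneg_right hgrad (norm_nonneg _))
  -- put it together
  have hLHS : ⟪(-lam) • S - gradient L x, x⟫ = -lam * ⟪x, S⟫ - ⟪gradient L x, x⟫ := by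
    rw [inner_sub_left, real_inner_smul_left, real_inner_comm S x]
  rw [hLHS]
  have hlamT : -lam * ⟪x, S⟫ ≤ -lam * (‖x‖ ^ 2 / μ 0) := by
    have := mul_le_mul_of_nonneg_left hT hlam.le
    linarith
  have hb : 0 ≤ ‖x‖ := norm_nonneg _
  have hbs : 0 ≤ ‖xstar‖ := norm_nonneg _
  have key : -lam * (‖x‖ ^ 2 / μ 0) + M' * (‖x‖ + ‖xstar‖) * ‖x‖
      ≤ -(ε / 2) * ‖x‖ ^ 2 + ((M' * ‖xstar‖) ^ 2 / (2 * ε) + 1) := by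
    have h0 : ε + M' = lam / μ 0 := by rw [hε]; ring
    have h2 : -lam * (‖x‖ ^ 2 / μ 0) = -(ε + M') * ‖x‖ ^ 2 := by
      rw [h0]; field_simp
    rw [h2]
    have hAM : M' * ‖xstar‖ * ‖x‖ - (ε / 2) * ‖x‖ ^ 2 ≤ (M' * ‖xstar‖) ^ 2 / (2 * ε) := by
      rw [le_div_iff₀ (by positivity)]
      nlinarith [sq_nonneg (ε * ‖x‖ - M' * ‖xstar‖)]
    nlinarith
  linarith
end

section
/- Let λ, η > 0 and let L : H → ℝ be Fréchet differentiable with M-Lipschitz gradient. Assume the strict dissipativity condition λ > M μ₀, and set ρ = (1 + ηM)/(1 + ηλ/μ₀), so that ρ < 1. Let (w_n)_{n∈ℕ} be an arbitrary sequence in H, and let (X_n) and (Y_n) be two sequences in H driven by the same perturbations: X_{n+1} = S_η(X_n − η∇L(X_n) + w_n) and Y_{n+1} = S_η(Y_n − η∇L(Y_n) + w_n). Then ‖X_n − Y_n‖ ≤ ρⁿ ‖X₀ − Y₀‖ for every n ∈ ℕ. -/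
open scoped RealInnerProductSpace

/-- **Exponential contraction of two coupled GLD chains under strict dissipativity.** -/
theorem stmt2 {H : Type*} [NormedAddCommGroup H] [InnerProductSpace ℝ H] [CompleteSpace H]
    (f : HilbertBasis ℕ ℝ H) (μ : ℕ → ℝ) (hμpos : ∀ k, 0 < μ k) (hμ0 : ∀ k, μ k ≤ μ 0)
    (lam η M : ℝ) (hlam : 0 < lam) (hη : 0 < η)
    (L : H → ℝ) (hdiff : Differentiable ℝ L)
    (hlip : ∀ x y : H, ‖gradient L x - gradient L y‖ ≤ M * ‖x - y‖)
    (hdiss : M * μ 0 < lam)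
    (S : H →L[ℝ] H) (hS : ∀ k, S (f k) = (1 + η * lam / μ k)⁻¹ • f k)
    (w X Y : ℕ → H)
    (hX : ∀ n, X (n + 1) = S (X n - η • gradient L (X n) + w n))
    (hY : ∀ n, Y (n + 1) = S (Y n - η • gradient L (Y n) + w n)) :
    (1 + η * M) / (1 + η * lam / μ 0) < 1 ∧
      ∀ n, ‖X n - Y n‖ ≤ ((1 + η * M) / (1 + η * lam / μ 0)) ^ n * ‖X 0 - Y 0‖ := by
  have hμ0pos := hμpos 0
  have hd : (0:ℝ) < 1 + η * lam / μ 0 := by positivity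
  set c : ℝ := (1 + η * lam / μ 0)⁻¹ with hcdef
  have hcpos : 0 < c := inv_pos.mpr hd
  have hρlt : (1 + η * M) / (1 + η * lam / μ 0) < 1 := by
    rw [div_lt_one hd]
    have h1 : M < lam / μ 0 := (lt_div_iff₀ hμ0pos).mpr hdiss
    have h2 : η * M < η * (lam / μ 0) := mul_lt_mul_of_pos_left h1 hη
    rw [mul_div_assoc]
    linarith
  refine ⟨hρlt, ?_⟩
  -- operator norm bound
  have hck : ∀ k, (0:ℝ) < 1 + η * lam / μ k := fun k => by have := hμpos k; positivity
  have hckc : ∀ k, (1 + η * lam / μ k)⁻¹ ≤ c := by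
    intro k
    apply inv_anti₀ hd
    have : η * lam / μ 0 ≤ η * lam / μ k :=
      div_le_div_of_nonneg_left (by positivity) (hμpos k) (hμ0 k)
    linarith
  have hSbound : ∀ z : H, ‖S z‖ ≤ c * ‖z‖ := by
    intro z
    have hinner : ∀ k, ⟪f k, S z⟫ = (1 + η * lam / μ k)⁻¹ * ⟪f k, z⟫ := by
      intro k
      have h1 : HasSum (fun j => f.repr z j • f j) z := f.hasSum_repr z
      have h2 : HasSum (fun j => (f.repr z j * (1 + η * lam / μ j)⁻¹) • f j) (S z) := by
        have := h1.mapL S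
        simpa [hS, smul_smul, mul_comm] using this
      have h3 : HasSum (fun j => (f.repr z j * (1 + η * lam / μ j)⁻¹) * ⟪f k, f j⟫)
          ⟪f k, S z⟫ := by
        have := h2.mapL (innerSL ℝ (f k))
        simpa [real_inner_smul_right] using this
      have horth := orthonormal_iff_ite.mp f.orthonormal
      have h4 : (fun j => (f.repr z j * (1 + η * lam / μ j)⁻¹) * ⟪f k, f j⟫)
          = fun j => if j = k then (f.repr z k * (1 + η * lam / μ k)⁻¹) else 0 := by
        funext j
        rw [horth k j]
        by_cases h : j = k
        · subst h; simp
        · simp [h, Ne.symm h]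
      rw [h4] at h3
      have h5 := hasSum_ite_eq k (f.repr z k * (1 + η * lam / μ k)⁻¹)
      have := h3.unique h5
      rw [this, f.repr_apply_apply]
      ring
    have hSz := f.hasSum_inner_mul_inner (S z) (S z)
    have hz := (f.hasSum_inner_mul_inner z z).mul_left (c ^ 2)
    have hle : ⟪S z, S z⟫ ≤ c ^ 2 * ⟪z, z⟫ := by
      refine hasSum_le (fun k => ?_) hSz hz
      rw [real_inner_comm (f k) (S z), real_inner_comm (f k) z, hinner k]
      have h1 := hck k
      have h2 := hckc k
      nlinarith [mul_self_nonneg (⟪f k, z⟫ : ℝ), mul_self_le_mul_self (inv_pos.mpr h1).le h2]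
    rw [real_inner_self_eq_norm_sq, real_inner_self_eq_norm_sq] at hle
    have : ‖S z‖ ^ 2 ≤ (c * ‖z‖) ^ 2 := by rw [mul_pow]; linarith
    exact (pow_le_pow_iff_left₀ (norm_nonneg _) (by positivity) two_ne_zero).mp this
  rcases subsingleton_or_nontrivial H with hsub | hnt
  · intro n
    have h0 : X n - Y n = 0 := Subsingleton.elim _ _
    have h1 : X 0 - Y 0 = 0 := Subsingleton.elim _ _
    simp [h0, h1]
  · obtain ⟨x, hx⟩ := exists_ne (0 : H)
    have hxn : 0 < ‖x‖ := norm_pos_iff.mpr hx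
    have hM : 0 ≤ M := by
      have := hlip x 0
      have h0 : (0:ℝ) ≤ M * ‖x - 0‖ := le_trans (norm_nonneg _) this
      rw [sub_zero] at h0
      nlinarith
    have hstep : ∀ n, ‖X (n+1) - Y (n+1)‖ ≤
        ((1 + η * M) / (1 + η * lam / μ 0)) * ‖X n - Y n‖ := by
      intro n
      have key : X (n+1) - Y (n+1) =
          S ((X n - Y n) - η • (gradient L (X n) - gradient L (Y n))) := by
        rw [hX n, hY n, ← map_sub]
        congr 1
        rw [smul_sub]
        abel
      rw [key]
      calc ‖S ((X n - Y n) - η • (gradient L (X n) - gradient L (Y n)))‖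
          ≤ c * ‖(X n - Y n) - η • (gradient L (X n) - gradient L (Y n))‖ := hSbound _
        _ ≤ c * ((1 + η * M) * ‖X n - Y n‖) := by
            apply mul_le_mul_of_nonneg_left _ hcpos.le
            calc ‖(X n - Y n) - η • (gradient L (X n) - gradient L (Y n))‖
                ≤ ‖X n - Y n‖ + ‖η • (gradient L (X n) - gradient L (Y n))‖ :=
                  norm_sub_le _ _
              _ = ‖X n - Y n‖ + η * ‖gradient L (X n) - gradient L (Y n)‖ := by
                  rw [norm_smul, Real.norm_of_nonneg hη.le]
              _ ≤ ‖X n - Y n‖ + η * (M * ‖X n - Y n‖) := by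
                  have := hlip (X n) (Y n)
                  nlinarith
              _ = (1 + η * M) * ‖X n - Y n‖ := by ring
        _ = ((1 + η * M) / (1 + η * lam / μ 0)) * ‖X n - Y n‖ := by
            rw [div_eq_mul_inv]; ring
    intro n
    induction n with
    | zero => simp
    | succ n ih =>
      have hρnn : 0 ≤ (1 + η * M) / (1 + η * lam / μ 0) := by positivity
      calc ‖X (n+1) - Y (n+1)‖ ≤ ((1 + η * M) / (1 + η * lam / μ 0)) * ‖X n - Y n‖ :=
            hstep n
        _ ≤ ((1 + η * M) / (1 + η * lam / μ 0)) *
            (((1 + η * M) / (1 + η * lam / μ 0)) ^ n * ‖X 0 - Y 0‖) :=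
            mul_le_mul_of_nonneg_left ih hρnn
        _ = ((1 + η * M) / (1 + η * lam / μ 0)) ^ (n+1) * ‖X 0 - Y 0‖ := by ring
end

section
/- Let λ, η > 0 and let L : H → ℝ be Fréchet differentiable with M-Lipschitz gradient and with a point x* ∈ H such that ∇L(x*) = 0. Assume the strict dissipativity condition λ > M μ₀, and set ρ = (1 + ηM)/(1 + ηλ/μ₀), so that ρ < 1. Let K ≥ 0, let (Z_n)_{n∈ℕ} be a sequence in H with ‖Z_n‖ ≤ K for all n, and let (Y_n)_{n∈ℕ} in H satisfy Y_{n+1} = S_η(Y_n − η∇L(Y_n + Z_n)). Then for every n ∈ ℕ, ‖Y_n‖ ≤ ρⁿ ‖Y₀‖ + (M μ₀/(λ − M μ₀)) (‖x*‖ + K). -/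
open scoped RealInnerProductSpace

/-- **Norm control of the perturbed chain under strict dissipativity.** -/
theorem stmt4 {H : Type*} [NormedAddCommGroup H] [InnerProductSpace ℝ H] [CompleteSpace H]
    (f : HilbertBasis ℕ ℝ H) (μ : ℕ → ℝ) (hμpos : ∀ k, 0 < μ k) (hμ0 : ∀ k, μ k ≤ μ 0)
    (lam η M : ℝ) (hlam : 0 < lam) (hη : 0 < η)
    (L : H → ℝ) (hdiff : Differentiable ℝ L)
    (hlip : ∀ x y : H, ‖gradient L x - gradient L y‖ ≤ M * ‖x - y‖)
    (xstar : H) (hcrit : gradient L xstar = 0)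
    (hdiss : M * μ 0 < lam)
    (S : H →L[ℝ] H) (hS : ∀ k, S (f k) = (1 + η * lam / μ k)⁻¹ • f k)
    (K : ℝ) (hK : 0 ≤ K) (Z Y : ℕ → H) (hZ : ∀ n, ‖Z n‖ ≤ K)
    (hY : ∀ n, Y (n + 1) = S (Y n - η • gradient L (Y n + Z n))) :
    (1 + η * M) / (1 + η * lam / μ 0) < 1 ∧
      ∀ n, ‖Y n‖ ≤ ((1 + η * M) / (1 + η * lam / μ 0)) ^ n * ‖Y 0‖ +
        (M * μ 0 / (lam - M * μ 0)) * (‖xstar‖ + K) := by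
  have hμ0pos := hμpos 0
  have hden : ∀ k, 0 < 1 + η * lam / μ k := by
    intro k
    have : 0 < η * lam / μ k := div_pos (mul_pos hη hlam) (hμpos k)
    linarith
  have hrpos : ∀ k, 0 < (1 + η * lam / μ k)⁻¹ := fun k => inv_pos.mpr (hden k)
  have hrle : ∀ k, (1 + η * lam / μ k)⁻¹ ≤ (1 + η * lam / μ 0)⁻¹ := by
    intro k
    have h1 : 1 + η * lam / μ 0 ≤ 1 + η * lam / μ k := by
      have : η * lam / μ 0 ≤ η * lam / μ k := by
        apply div_le_div_of_nonneg_left (le_of_lt (mul_pos hη hlam)) (hμpos k) (hμ0 k)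
      linarith
    exact inv_anti₀ (hden 0) h1
  have hM : 0 ≤ M := by
    have h := hlip (f 0) 0
    have hn : ‖f 0 - 0‖ = 1 := by rw [sub_zero]; exact f.orthonormal.1 0
    rw [hn, mul_one] at h
    exact le_trans (norm_nonneg _) h
  -- inner products of S x against the basis
  have hSx : ∀ (x : H) (j : ℕ), ⟪f j, S x⟫ = (1 + η * lam / μ j)⁻¹ * ⟪f j, x⟫ := by
    intro x j
    have h1 : HasSum (fun k => f.repr x k • f k) x := f.hasSum_repr x
    have h2 := h1.mapL S
    simp only [map_smul, hS] at h2
    have h3 := h2.mapL (innerSL ℝ (f j))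
    have h4 : (fun k => (innerSL ℝ (f j)) (f.repr x k • (1 + η * lam / μ k)⁻¹ • f k))
        = fun k => if k = j then (1 + η * lam / μ j)⁻¹ * f.repr x j else 0 := by
      funext k
      simp only [innerSL_apply_apply, inner_smul_right, real_inner_smul_right]
      rw [orthonormal_iff_ite.mp f.orthonormal j k]
      by_cases hk : k = j
      · subst hk; simp [mul_comm]
      · simp [hk, Ne.symm hk]
    rw [h4] at h3
    have h5 : HasSum (fun k => if k = j then (1 + η * lam / μ j)⁻¹ * f.repr x j else 0)
        ((1 + η * lam / μ j)⁻¹ * f.repr x j) := hasSum_ite_eq j _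
    have h6 := h3.unique h5
    simp only [innerSL_apply_apply] at h6
    rw [h6, f.repr_apply_apply]
  have hSnorm : ∀ x : H, ‖S x‖ ≤ (1 + η * lam / μ 0)⁻¹ * ‖x‖ := by
    intro x
    have hx := f.hasSum_inner_mul_inner x x
    have hsx := f.hasSum_inner_mul_inner (S x) (S x)
    have hle : ∀ k, ⟪S x, f k⟫ * ⟪f k, S x⟫ ≤
        ((1 + η * lam / μ 0)⁻¹) ^ 2 * (⟪x, f k⟫ * ⟪f k, x⟫) := by
      intro k
      have e : ⟪S x, f k⟫ * ⟪f k, S x⟫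
          = ((1 + η * lam / μ k)⁻¹) ^ 2 * (⟪x, f k⟫ * ⟪f k, x⟫) := by
        rw [real_inner_comm (f k) (S x), hSx x k, real_inner_comm (f k) x]; ring
      rw [e]
      have hnn : 0 ≤ ⟪x, f k⟫ * ⟪f k, x⟫ := by
        rw [real_inner_comm (f k) x]; exact mul_self_nonneg _
      exact mul_le_mul_of_nonneg_right
        (pow_le_pow_left₀ (le_of_lt (hrpos k)) (hrle k) 2) hnn
    have hkey := hasSum_le hle hsx (hx.mul_left (((1 + η * lam / μ 0)⁻¹) ^ 2))
    rw [real_inner_self_eq_norm_sq, real_inner_self_eq_norm_sq] at hkey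
    nlinarith [norm_nonneg (S x), norm_nonneg x, hrpos 0,
      mul_nonneg (le_of_lt (hrpos 0)) (norm_nonneg x)]
  have hrho_lt : (1 + η * M) / (1 + η * lam / μ 0) < 1 := by
    rw [div_lt_one (hden 0)]
    have h1 : M < lam / μ 0 := (lt_div_iff₀ hμ0pos).mpr (by linarith)
    have h2 : η * M < η * (lam / μ 0) := mul_lt_mul_of_pos_left h1 hη
    have h3 : η * lam / μ 0 = η * (lam / μ 0) := by ring
    linarith
  refine ⟨hrho_lt, ?_⟩
  set ρ := (1 + η * M) / (1 + η * lam / μ 0) with hrho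
  set D := M * μ 0 / (lam - M * μ 0) * (‖xstar‖ + K) with hD
  have hρnn : 0 ≤ ρ := div_nonneg (by positivity) (le_of_lt (hden 0))
  have hstep : ∀ n, ‖Y (n + 1)‖ ≤
      ρ * ‖Y n‖ + η * M * (1 + η * lam / μ 0)⁻¹ * (‖xstar‖ + K) := by
    intro n
    rw [hY n]
    have hg : ‖gradient L (Y n + Z n)‖ ≤ M * (‖Y n‖ + (K + ‖xstar‖)) := by
      have h := hlip (Y n + Z n) xstar
      rw [hcrit, sub_zero] at h
      have h2 : ‖Y n + Z n - xstar‖ ≤ ‖Y n‖ + (K + ‖xstar‖) := by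
        calc ‖Y n + Z n - xstar‖ ≤ ‖Y n‖ + ‖Z n - xstar‖ := by
              rw [add_sub_assoc]; exact norm_add_le _ _
          _ ≤ ‖Y n‖ + (K + ‖xstar‖) := by
              have h3 := norm_sub_le (Z n) xstar
              have h4 := hZ n
              linarith
      exact le_trans h (mul_le_mul_of_nonneg_left h2 hM)
    calc ‖S (Y n - η • gradient L (Y n + Z n))‖
        ≤ (1 + η * lam / μ 0)⁻¹ * ‖Y n - η • gradient L (Y n + Z n)‖ := hSnorm _
      _ ≤ (1 + η * lam / μ 0)⁻¹ * (‖Y n‖ + η * (M * (‖Y n‖ + (K + ‖xstar‖)))) := by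
          apply mul_le_mul_of_nonneg_left _ (le_of_lt (hrpos 0))
          calc ‖Y n - η • gradient L (Y n + Z n)‖
              ≤ ‖Y n‖ + ‖η • gradient L (Y n + Z n)‖ := norm_sub_le _ _
            _ = ‖Y n‖ + η * ‖gradient L (Y n + Z n)‖ := by
                rw [norm_smul, Real.norm_of_nonneg (le_of_lt hη)]
            _ ≤ _ := by nlinarith [hg]
      _ = ρ * ‖Y n‖ + η * M * (1 + η * lam / μ 0)⁻¹ * (‖xstar‖ + K) := by
          rw [hrho, div_eq_mul_inv]; ring
  have hfix : ρ * D + η * M * (1 + η * lam / μ 0)⁻¹ * (‖xstar‖ + K) = D := by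
    rw [hrho, hD]
    have h1 : μ 0 ≠ 0 := ne_of_gt hμ0pos
    have h2 : lam - M * μ 0 ≠ 0 := ne_of_gt (by linarith)
    have h3 : (1 : ℝ) + η * lam / μ 0 ≠ 0 := ne_of_gt (hden 0)
    field_simp
    ring
  have hDnn : 0 ≤ D := by
    rw [hD]
    apply mul_nonneg (div_nonneg (mul_nonneg hM (le_of_lt hμ0pos)) (by linarith))
    positivity
  intro n
  induction n with
  | zero => simp; linarith
  | succ n ih =>
    calc ‖Y (n + 1)‖ ≤ ρ * ‖Y n‖ + η * M * (1 + η * lam / μ 0)⁻¹ * (‖xstar‖ + K) :=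
          hstep n
      _ ≤ ρ * (ρ ^ n * ‖Y 0‖ + D) + η * M * (1 + η * lam / μ 0)⁻¹ * (‖xstar‖ + K) := by
          have := mul_le_mul_of_nonneg_left ih hρnn
          linarith
      _ = ρ ^ (n + 1) * ‖Y 0‖ + (ρ * D + η * M * (1 + η * lam / μ 0)⁻¹ * (‖xstar‖ + K)) := by
          ring
      _ = ρ ^ (n + 1) * ‖Y 0‖ + D := by rw [hfix]
end

section
/- Let n ≥ 1, let ψ₁, …, ψ_n ∈ H, let α ∈ ℝ, let G > 0, and let ℓ₁, …, ℓ_n : ℝ → ℝ be twice differentiable with |ℓ_i''(u)| ≤ G for all u ∈ ℝ and all i. Suppose ‖ψ_i‖ ≤ √R for every i and that each ψ_i satisfies ‖ψ_i‖_{−α} < ∞. Then for every x ∈ H and all h, k ∈ H with ‖k‖_α < ∞, | (1/n) Σ_{i=1}^n ℓ_i''(⟨x, ψ_i⟩) ⟨ψ_i, h⟩ ⟨ψ_i, k⟩ | ≤ G · √R · ( (1/n) Σ_{i=1}^n ‖ψ_i‖_{−α}² )^{1/2} · ‖h‖ · ‖k‖_α. -/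
/-!
Each term is at most `G · √R ‖h‖ · ‖ψᵢ‖_{-α} ‖k‖_α`: Cauchy–Schwarz in `H` bounds `⟪ψᵢ, h⟫`, and
Cauchy–Schwarz on the basis coordinates, split as `μⱼ^{-α}⟪ψᵢ, fⱼ⟫ · μⱼ^{α}⟪k, fⱼ⟫`, bounds
`⟪ψᵢ, k⟫`. Averaging over `i`, the mean of the `‖ψᵢ‖_{-α}` is at most their quadratic mean.
-/

open scoped RealInnerProductSpace BigOperators

open Finset

lemma abs_tsum_mul_le_sqrt_mul_sqrt {ι : Type*} {a b : ι → ℝ} (ha : Summable fun j => a j ^ 2)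
    (hb : Summable fun j => b j ^ 2) :
    |∑' j, a j * b j| ≤ √(∑' j, a j ^ 2) * √(∑' j, b j ^ 2) := by
  have hsq : ∀ c : ι → ℝ, (fun j => |c j| ^ (2 : ℝ)) = fun j => c j ^ 2 := fun c =>
    funext fun j => by rw [Real.rpow_two, sq_abs]
  obtain ⟨habs, hle⟩ :=
    Real.summable_and_inner_le_Lp_mul_Lq_tsum_of_nonneg Real.HolderConjugate.two_two
    (f := fun j => |a j|) (g := fun j => |b j|) (fun _ => abs_nonneg _) (fun _ => abs_nonneg _)
    (by rwa [hsq]) (by rwa [hsq])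
  rw [hsq, hsq, ← Real.sqrt_eq_rpow, ← Real.sqrt_eq_rpow] at hle
  calc |∑' j, a j * b j| ≤ ∑' j, |a j * b j| := by
        simpa only [Real.norm_eq_abs] using
          norm_tsum_le_tsum_norm (f := fun j => a j * b j)
            (by simpa only [Real.norm_eq_abs, abs_mul] using habs)
    _ = ∑' j, |a j| * |b j| := by simp only [abs_mul]
    _ ≤ _ := hle

lemma HilbertBasis.abs_inner_le_sqrt_mul_sqrt_weighted {ι E : Type*} [NormedAddCommGroup E]
    [InnerProductSpace ℝ E] (b : HilbertBasis ι ℝ E) {w : ι → ℝ} (hw : ∀ j, 0 < w j) {x y : E}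
    (hx : Summable fun j => (w j)⁻¹ * ⟪x, b j⟫ ^ 2) (hy : Summable fun j => w j * ⟪y, b j⟫ ^ 2) :
    |⟪x, y⟫| ≤ √(∑' j, (w j)⁻¹ * ⟪x, b j⟫ ^ 2) * √(∑' j, w j * ⟪y, b j⟫ ^ 2) := by
  have hx' : ∀ j, ((√(w j))⁻¹ * ⟪x, b j⟫) ^ 2 = (w j)⁻¹ * ⟪x, b j⟫ ^ 2 := fun j => by
    rw [mul_pow, inv_pow, Real.sq_sqrt (hw j).le]
  have hy' : ∀ j, (√(w j) * ⟪y, b j⟫) ^ 2 = w j * ⟪y, b j⟫ ^ 2 := fun j => by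
    rw [mul_pow, Real.sq_sqrt (hw j).le]
  have hxy : ∀ j, (√(w j))⁻¹ * ⟪x, b j⟫ * (√(w j) * ⟪y, b j⟫) = ⟪x, b j⟫ * ⟪b j, y⟫ := fun j => by
    have : √(w j) ≠ 0 := (Real.sqrt_pos.2 (hw j)).ne'
    rw [real_inner_comm y]
    field_simp
  have := abs_tsum_mul_le_sqrt_mul_sqrt (a := fun j => (√(w j))⁻¹ * ⟪x, b j⟫)
    (b := fun j => √(w j) * ⟪y, b j⟫) (by simpa only [hx'] using hx) (by simpa only [hy'] using hy)
  simpa only [hxy, hx', hy', b.tsum_inner_mul_inner] using this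

lemma Finset.sum_div_card_le_sqrt_sum_sq_div_card {ι : Type*} (s : Finset ι) (a : ι → ℝ) :
    (∑ i ∈ s, a i) / #s ≤ √((∑ i ∈ s, a i ^ 2) / #s) :=
  (le_abs_self _).trans (Real.abs_le_sqrt sum_div_card_sq_le_sum_sq_div_card)

theorem stmt6_general {H : Type*} [NormedAddCommGroup H] [InnerProductSpace ℝ H]
    (f : HilbertBasis ℕ ℝ H) (μ : ℕ → ℝ) (hμpos : ∀ k, 0 < μ k)
    (n : ℕ) (ψ : Fin n → H) (α : ℝ) (G R : ℝ) (hG : 0 < G)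
    (ℓ : Fin n → ℝ → ℝ)
    (hGbound : ∀ i u, |deriv (deriv (ℓ i)) u| ≤ G)
    (hψnorm : ∀ i, ‖ψ i‖ ≤ Real.sqrt R)
    (hψα : ∀ i, Summable (fun j => μ j ^ (-(2 : ℝ) * α) * ⟪ψ i, f j⟫ ^ 2)) :
    ∀ x h k : H, Summable (fun j => μ j ^ ((2 : ℝ) * α) * ⟪k, f j⟫ ^ 2) →
      |(n : ℝ)⁻¹ * ∑ i, deriv (deriv (ℓ i)) ⟪x, ψ i⟫ * ⟪ψ i, h⟫ * ⟪ψ i, k⟫|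
        ≤ G * Real.sqrt R *
            Real.sqrt ((n : ℝ)⁻¹ * ∑ i, ∑' j, μ j ^ (-(2 : ℝ) * α) * ⟪ψ i, f j⟫ ^ 2) *
            ‖h‖ * Real.sqrt (∑' j, μ j ^ ((2 : ℝ) * α) * ⟪k, f j⟫ ^ 2) := by
  intro x h k hk
  set A : Fin n → ℝ := fun i => √(∑' j, μ j ^ (-(2 : ℝ) * α) * ⟪ψ i, f j⟫ ^ 2)
  set B := √(∑' j, μ j ^ ((2 : ℝ) * α) * ⟪k, f j⟫ ^ 2)
  have hweight : ∀ j, μ j ^ (-(2 : ℝ) * α) = (μ j ^ ((2 : ℝ) * α))⁻¹ := fun j => by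
    rw [neg_mul, Real.rpow_neg (hμpos j).le]
  have hψk : ∀ i, |⟪ψ i, k⟫| ≤ A i * B := fun i => by
    simp only [A, B, hweight] at hψα ⊢
    exact f.abs_inner_le_sqrt_mul_sqrt_weighted (fun j => Real.rpow_pos_of_pos (hμpos j) _)
      (hψα i) hk
  have hψh : ∀ i, |⟪ψ i, h⟫| ≤ √R * ‖h‖ := fun i =>
    (abs_real_inner_le_norm _ _).trans (by gcongr; exact hψnorm i)
  have hterm : ∀ i, |deriv (deriv (ℓ i)) ⟪x, ψ i⟫ * ⟪ψ i, h⟫ * ⟪ψ i, k⟫|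
      ≤ G * √R * ‖h‖ * B * A i := fun i => by
    rw [abs_mul, abs_mul]
    calc _ ≤ G * (√R * ‖h‖) * (A i * B) := by
          gcongr
          exacts [hGbound i _, hψh i, hψk i]
      _ = _ := by ring
  calc |(n : ℝ)⁻¹ * ∑ i, deriv (deriv (ℓ i)) ⟪x, ψ i⟫ * ⟪ψ i, h⟫ * ⟪ψ i, k⟫|
      ≤ (n : ℝ)⁻¹ * ∑ i, G * √R * ‖h‖ * B * A i := by
        rw [abs_mul, abs_inv, Nat.abs_cast]
        gcongr
        exact (abs_sum_le_sum_abs _ _).trans (sum_le_sum fun i _ => hterm i)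
    _ = G * √R * ‖h‖ * B * ((∑ i, A i) / #(univ : Finset (Fin n))) := by
        rw [← mul_sum, card_univ, Fintype.card_fin]
        ring
    _ ≤ G * √R * ‖h‖ * B * √((∑ i, A i ^ 2) / #(univ : Finset (Fin n))) := by
        gcongr
        exact sum_div_card_le_sqrt_sum_sq_div_card _ _
    _ = _ := by
        simp only [A, card_univ, Fintype.card_fin, Real.sq_sqrt (tsum_nonneg fun j =>
          mul_nonneg (Real.rpow_nonneg (hμpos j).le _) (sq_nonneg _)), div_eq_inv_mul]
        ring

/-- **Bound on the second derivative of the empirical risk in the weighted norms.** -/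
theorem stmt6 {H : Type*} [NormedAddCommGroup H] [InnerProductSpace ℝ H] [CompleteSpace H]
    (f : HilbertBasis ℕ ℝ H) (μ : ℕ → ℝ) (hμpos : ∀ k, 0 < μ k) (hμ0 : ∀ k, μ k ≤ μ 0)
    (n : ℕ) (hn : 1 ≤ n) (ψ : Fin n → H) (α : ℝ) (G R : ℝ) (hG : 0 < G)
    (ℓ : Fin n → ℝ → ℝ)
    (hdiff1 : ∀ i, Differentiable ℝ (ℓ i))
    (hdiff2 : ∀ i, Differentiable ℝ (deriv (ℓ i)))
    (hGbound : ∀ i u, |deriv (deriv (ℓ i)) u| ≤ G)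
    (hψnorm : ∀ i, ‖ψ i‖ ≤ Real.sqrt R)
    (hψα : ∀ i, Summable (fun j => μ j ^ (-(2 : ℝ) * α) * ⟪ψ i, f j⟫ ^ 2)) :
    ∀ x h k : H, Summable (fun j => μ j ^ ((2 : ℝ) * α) * ⟪k, f j⟫ ^ 2) →
      |(n : ℝ)⁻¹ * ∑ i, deriv (deriv (ℓ i)) ⟪x, ψ i⟫ * ⟪ψ i, h⟫ * ⟪ψ i, k⟫|
        ≤ G * Real.sqrt R *
            Real.sqrt ((n : ℝ)⁻¹ * ∑ i, ∑' j, μ j ^ (-(2 : ℝ) * α) * ⟪ψ i, f j⟫ ^ 2) *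
            ‖h‖ * Real.sqrt (∑' j, μ j ^ ((2 : ℝ) * α) * ⟪k, f j⟫ ^ 2) :=
  stmt6_general f μ hμpos n ψ α G R hG ℓ hGbound hψnorm hψα
end

section
/- Let (a_k)_{k∈ℕ} be positive reals with a_k ≥ a₀ > 0 for every k, let η > 0, 0 ≤ κ ≤ 1, and let j ≥ 1 be an integer. Then for every k, a_k^{1−κ} (1 + η a_k)^{−j} ≤ (jη)^{−(1−κ)} (1 + η a₀)^{−jκ}. Consequently, the diagonal linear operator T on H determined by T f_k = a_k^{1−κ} (1 + η a_k)^{−j} f_k is bounded with operator norm at most (jη)^{κ−1} (1 + η a₀)^{−jκ}. -/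
/-!
Split `(1 + ηa)^{-j} = (1 + ηa)^{-j(1-κ)} (1 + ηa)^{-jκ}`. Bernoulli's inequality
`jηa ≤ (1 + ηa)^j` bounds `a (1 + ηa)^{-j}` by `(jη)⁻¹`, and raising this to the power `1 - κ`
controls the first factor; the second is antitone in `a`, hence maximal at `a₀`. A diagonal
operator in a Hilbert basis acts coordinatewise on `ℓ²`, so its norm is at most the supremum of the
absolute values of its eigenvalues.
-/

open Real

section ScalarBound

variable {a η : ℝ} {j : ℕ}

theorem mul_one_add_mul_rpow_neg_le_inv (ha : 0 ≤ a) (hη : 0 < η) (hj : 1 ≤ j) :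
    a * (1 + η * a) ^ (-(j : ℝ)) ≤ ((j : ℝ) * η)⁻¹ := by
  have hjη : 0 < (j : ℝ) * η := mul_pos (by exact_mod_cast hj) hη
  have hbpos : 0 < (1 + η * a) ^ j := pow_pos (by positivity) j
  have bernoulli : (j : ℝ) * (η * a) ≤ (1 + η * a) ^ j :=
    (le_add_of_nonneg_left zero_le_one).trans
      (one_add_mul_le_pow (by nlinarith [mul_nonneg hη.le ha]) j)
  rw [rpow_neg (by positivity), rpow_natCast, ← div_eq_mul_inv, div_le_iff₀ hbpos,
    inv_mul_eq_div, le_div_iff₀ hjη]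
  linarith

theorem rpow_one_sub_mul_one_add_mul_rpow_neg_mul_le {κ : ℝ} (ha : 0 ≤ a) (hη : 0 < η) (hκ1 : κ ≤ 1)
    (hj : 1 ≤ j) :
    a ^ (1 - κ) * (1 + η * a) ^ (-(j : ℝ) * (1 - κ)) ≤ ((j : ℝ) * η) ^ (κ - 1) := by
  have hb : 0 ≤ 1 + η * a := by positivity
  calc a ^ (1 - κ) * (1 + η * a) ^ (-(j : ℝ) * (1 - κ))
      = (a * (1 + η * a) ^ (-(j : ℝ))) ^ (1 - κ) := by
        rw [rpow_mul hb, mul_rpow ha (rpow_nonneg hb _)]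
    _ ≤ ((j : ℝ) * η)⁻¹ ^ (1 - κ) :=
        rpow_le_rpow (mul_nonneg ha (rpow_nonneg hb _))
          (mul_one_add_mul_rpow_neg_le_inv ha hη hj) (by linarith)
    _ = ((j : ℝ) * η) ^ (κ - 1) := by
        rw [inv_rpow (by positivity), ← rpow_neg (by positivity), neg_sub]

theorem rpow_one_sub_mul_one_add_mul_rpow_neg_le {a₀ κ : ℝ} (ha₀ : 0 ≤ a₀) (h : a₀ ≤ a)
    (hη : 0 < η) (hκ0 : 0 ≤ κ) (hκ1 : κ ≤ 1) (hj : 1 ≤ j) :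
    a ^ (1 - κ) * (1 + η * a) ^ (-(j : ℝ))
      ≤ ((j : ℝ) * η) ^ (κ - 1) * (1 + η * a₀) ^ (-((j : ℝ) * κ)) := by
  have ha : 0 ≤ a := ha₀.trans h
  have hb : 0 < 1 + η * a := by positivity
  have antitone_in_a : (1 + η * a) ^ (-((j : ℝ) * κ)) ≤ (1 + η * a₀) ^ (-((j : ℝ) * κ)) :=
    rpow_le_rpow_of_nonpos (by positivity) (by gcongr)
      (neg_nonpos.mpr (by positivity))
  calc a ^ (1 - κ) * (1 + η * a) ^ (-(j : ℝ))
      = a ^ (1 - κ) * (1 + η * a) ^ (-(j : ℝ) * (1 - κ)) * (1 + η * a) ^ (-((j : ℝ) * κ)) := by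
        rw [mul_assoc, ← rpow_add hb]; ring_nf
    _ ≤ ((j : ℝ) * η) ^ (κ - 1) * (1 + η * a₀) ^ (-((j : ℝ) * κ)) :=
        mul_le_mul (rpow_one_sub_mul_one_add_mul_rpow_neg_mul_le ha hη hκ1 hj) antitone_in_a
          (rpow_nonneg hb.le _) (rpow_nonneg (by positivity) _)

end ScalarBound

namespace HilbertBasis

variable {ι 𝕜 E : Type*} [RCLike 𝕜] [NormedAddCommGroup E] [InnerProductSpace 𝕜 E]
  (b : HilbertBasis ι 𝕜 E) {T : E →L[𝕜] E} {c : ι → 𝕜}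

theorem repr_apply_eq_mul_of_apply_eq_smul (hT : ∀ i, T (b i) = c i • b i) (x : E) (i : ι) :
    b.repr (T x) i = c i * b.repr x i := by
  have hdense : Dense (Submodule.span 𝕜 (Set.range b) : Set E) :=
    Submodule.dense_iff_topologicalClosure_eq_top.mpr b.dense_span
  have hext : (innerSL 𝕜 (b i)).comp T = c i • innerSL 𝕜 (b i) := by
    refine ContinuousLinearMap.ext_on hdense ?_
    rintro _ ⟨n, rfl⟩
    simp only [ContinuousLinearMap.comp_apply, smul_apply,
      innerSL_apply_apply, hT n, inner_smul_right, smul_eq_mul]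
    by_cases hin : i = n
    · rw [hin]
    · rw [b.orthonormal.inner_eq_zero hin, mul_zero, mul_zero]
  simpa [b.repr_apply_apply] using DFunLike.congr_fun hext x

theorem opNorm_le_of_apply_eq_smul (hT : ∀ i, T (b i) = c i • b i) {C : ℝ} (hC : 0 ≤ C)
    (hc : ∀ i, ‖c i‖ ≤ C) : ‖T‖ ≤ C := by
  refine T.opNorm_le_bound hC fun x => ?_
  have hcoord : ∀ i, ‖b.repr (T x) i‖ ≤ ‖((C : 𝕜) • b.repr x) i‖ := fun i => by
    rw [b.repr_apply_eq_mul_of_apply_eq_smul hT, lp.coeFn_smul, Pi.smul_apply, norm_smul,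
      norm_mul, RCLike.norm_ofReal, abs_of_nonneg hC]
    gcongr
    exact hc i
  calc ‖T x‖ = ‖b.repr (T x)‖ := (b.repr.norm_map _).symm
    _ ≤ ‖(C : 𝕜) • b.repr x‖ := lp.norm_mono two_ne_zero hcoord
    _ = C * ‖x‖ := by rw [norm_smul, RCLike.norm_ofReal, abs_of_nonneg hC, b.repr.norm_map]

end HilbertBasis

theorem stmt9_general {H : Type*} [NormedAddCommGroup H] [InnerProductSpace ℝ H]
    (f : HilbertBasis ℕ ℝ H) (a : ℕ → ℝ) (ha0 : 0 < a 0) (ha : ∀ k, a 0 ≤ a k)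
    (η κ : ℝ) (hη : 0 < η) (hκ0 : 0 ≤ κ) (hκ1 : κ ≤ 1) (j : ℕ) (hj : 1 ≤ j)
    (T : H →L[ℝ] H)
    (hT : ∀ k, T (f k) = (a k ^ ((1 : ℝ) - κ) * (1 + η * a k) ^ (-(j : ℝ))) • f k) :
    (∀ k, a k ^ ((1 : ℝ) - κ) * (1 + η * a k) ^ (-(j : ℝ))
        ≤ ((j : ℝ) * η) ^ (κ - 1) * (1 + η * a 0) ^ (-((j : ℝ) * κ))) ∧
      ‖T‖ ≤ ((j : ℝ) * η) ^ (κ - 1) * (1 + η * a 0) ^ (-((j : ℝ) * κ)) := by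
  have hbound : ∀ k, a k ^ ((1 : ℝ) - κ) * (1 + η * a k) ^ (-(j : ℝ))
      ≤ ((j : ℝ) * η) ^ (κ - 1) * (1 + η * a 0) ^ (-((j : ℝ) * κ)) := fun k =>
    rpow_one_sub_mul_one_add_mul_rpow_neg_le ha0.le (ha k) hη hκ0 hκ1 hj
  refine ⟨hbound, f.opNorm_le_of_apply_eq_smul hT (by positivity) fun k => ?_⟩
  have hak : 0 ≤ a k := ha0.le.trans (ha k)
  rw [Real.norm_of_nonneg (by positivity)]
  exact hbound k

/-- **Smoothing bound `‖(−A)^{1−κ} S_η^j‖ ≤ (jη)^{κ−1}(1+ηa₀)^{−jκ}`.** -/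
theorem stmt9 {H : Type*} [NormedAddCommGroup H] [InnerProductSpace ℝ H] [CompleteSpace H]
    (f : HilbertBasis ℕ ℝ H) (a : ℕ → ℝ) (ha0 : 0 < a 0) (ha : ∀ k, a 0 ≤ a k)
    (η κ : ℝ) (hη : 0 < η) (hκ0 : 0 ≤ κ) (hκ1 : κ ≤ 1) (j : ℕ) (hj : 1 ≤ j)
    (T : H →L[ℝ] H)
    (hT : ∀ k, T (f k) = (a k ^ ((1 : ℝ) - κ) * (1 + η * a k) ^ (-(j : ℝ))) • f k) :
    (∀ k, a k ^ ((1 : ℝ) - κ) * (1 + η * a k) ^ (-(j : ℝ))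
        ≤ ((j : ℝ) * η) ^ (κ - 1) * (1 + η * a 0) ^ (-((j : ℝ) * κ))) ∧
      ‖T‖ ≤ ((j : ℝ) * η) ^ (κ - 1) * (1 + η * a 0) ^ (-((j : ℝ) * κ)) :=
  stmt9_general f a ha0 ha η κ hη hκ0 hκ1 j hj T hT
end
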